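/- For each m, the formula A_m = χ_m ∧ EX AG ¬p (χ₀ = ∀□p, χ_{k+1} = p ∧ EX(¬p ∧ EX χ_k)) is satisfiable: it holds at the root r_m of the chain model M_m. Moreover A_m implies p and implies EX(AG ¬p), so any state satisfying A_m has both a successor from which p is always false on all paths and (for m ≥ 1) a successor satisfying ¬p starting an alternating ¬p/p chain of length 2m. -/
import Mathlib


/-- CTL formulas: variables, falsehood, implication, AX, ∀U, ∃U. -/
inductive CTL : Type where
  | var : ℕ → CTL
  | bot : CTL
  | imp : CTL → CTL → CTL
  | ax : CTL → CTL
  | au : CTL → CTL → CTL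
  | eu : CTL → CTL → CTL

namespace CTL
def neg (φ : CTL) : CTL := imp φ bot
def top : CTL := imp bot bot
def conj (φ ψ : CTL) : CTL := neg (imp φ (neg ψ))
def iffc (φ ψ : CTL) : CTL := conj (imp φ ψ) (imp ψ φ)
def ex (φ : CTL) : CTL := neg (ax (neg φ))
def ef (φ : CTL) : CTL := eu top φ
def ag (φ : CTL) : CTL := neg (ef (neg φ))
end CTL

/-- Serial Kripke models. -/
structure Kripke (S : Type) where
  rel : S → S → Prop
  serial : ∀ s, ∃ t, rel s t
  val : ℕ → S → Prop

def isPath {S : Type} (M : Kripke S) (π : ℕ → S) : Prop :=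
  ∀ i, M.rel (π i) (π (i + 1))

/-- CTL satisfaction over serial Kripke models. -/
def sat {S : Type} (M : Kripke S) : CTL → S → Prop
  | .var n, s => M.val n s
  | .bot, _ => False
  | .imp a b, s => sat M a s → sat M b s
  | .ax a, s => ∀ t, M.rel s t → sat M a t
  | .au a b, s => ∀ π, isPath M π → π 0 = s →
      ∃ i, sat M b (π i) ∧ ∀ j, j < i → sat M a (π j)
  | .eu a b, s => ∃ π, isPath M π ∧ π 0 = s ∧
      ∃ i, sat M b (π i) ∧ ∀ j, j < i → sat M a (π j)

def satisfiable (φ : CTL) : Prop := ∃ (S : Type) (M : Kripke S) (s : S), sat M φ s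
def valid (φ : CTL) : Prop := ∀ (S : Type) (M : Kripke S) (s : S), sat M φ s

/-- Variable q occurs in a formula. -/
def occurs (q : ℕ) : CTL → Prop
  | .var n => n = q
  | .bot => False
  | .imp a b => occurs q a ∨ occurs q b
  | .ax a => occurs q a
  | .au a b => occurs q a ∨ occurs q b
  | .eu a b => occurs q a ∨ occurs q b

/-- Uniform substitution of ψ for variable p. -/
def subst (p : ℕ) (ψ : CTL) : CTL → CTL
  | .var n => if n = p then ψ else .var n
  | .bot => .bot
  | .imp a b => .imp (subst p ψ a) (subst p ψ b)
  | .ax a => .ax (subst p ψ a)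
  | .au a b => .au (subst p ψ a) (subst p ψ b)
  | .eu a b => .eu (subst p ψ a) (subst p ψ b)

/-- The relativizing translation ·' with guard variable q. -/
def relTr (q : ℕ) : CTL → CTL
  | .var n => .var n
  | .bot => .bot
  | .imp a b => .imp (relTr q a) (relTr q b)
  | .ax a => .ax (.imp (.var q) (relTr q a))
  | .au a b => .au (relTr q a) (CTL.conj (.var q) (relTr q b))
  | .eu a b => .eu (relTr q a) (CTL.conj (.var q) (relTr q b))

/-- Θ = q ∧ AG(EX q ↔ q). -/
def Theta (q : ℕ) : CTL :=
  CTL.conj (.var q) (CTL.ag (CTL.iffc (CTL.ex (.var q)) (.var q)))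

/-- Transition relation of the chain model M_m: state 0 = root r_m, state 1 = b^m,
state i+1 = a_i for 1 ≤ i ≤ 2m; self-loops everywhere. -/
def chainRel (m : ℕ) (s t : Fin (2 * m + 2)) : Prop :=
  (s.val = 0 ∧ (t.val = 1 ∨ t.val = 2)) ∨
  (2 ≤ s.val ∧ s.val ≤ 2 * m ∧ t.val = s.val + 1) ∨
  t = s

/-- p is true exactly at the root and the even-indexed chain states a_{2j}. -/
def chainVal (m : ℕ) (s : Fin (2 * m + 2)) : Prop :=
  s.val = 0 ∨ (3 ≤ s.val ∧ s.val % 2 = 1)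

def chainModel (m : ℕ) : Kripke (Fin (2 * m + 2)) where
  rel := chainRel m
  serial := fun s => ⟨s, Or.inr (Or.inr rfl)⟩
  val := fun n s => n = 0 ∧ chainVal m s

def chainRoot (m : ℕ) : Fin (2 * m + 2) := ⟨0, by omega⟩

/-- χ₀ = ∀□p, χ_{k+1} = p ∧ EX(¬p ∧ EX χ_k); the single variable p is var 0. -/
def chi : ℕ → CTL
  | 0 => CTL.ag (.var 0)
  | k + 1 => CTL.conj (.var 0) (CTL.ex (CTL.conj (CTL.neg (.var 0)) (CTL.ex (chi k))))

/-- A_m = χ_m ∧ EX AG ¬p. -/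
def Aform (m : ℕ) : CTL := CTL.conj (chi m) (CTL.ex (CTL.ag (CTL.neg (.var 0))))

/-- B_m = EX A_m. -/
def Bform (m : ℕ) : CTL := CTL.ex (Aform m)

/-- The substitution σ : pᵢ ↦ Bᵢ for 1 ≤ i ≤ n+1. -/
def sigmaSub (n : ℕ) : CTL → CTL
  | .var i => if 1 ≤ i ∧ i ≤ n + 1 then Bform i else .var i
  | .bot => .bot
  | .imp a b => .imp (sigmaSub n a) (sigmaSub n b)
  | .ax a => .ax (sigmaSub n a)
  | .au a b => .au (sigmaSub n a) (sigmaSub n b)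
  | .eu a b => .eu (sigmaSub n a) (sigmaSub n b)

section Aux

lemma sat_conj {S : Type} (M : Kripke S) (φ ψ : CTL) (s : S) :
    sat M (CTL.conj φ ψ) s ↔ sat M φ s ∧ sat M ψ s := by
  simp only [CTL.conj, CTL.neg, sat]; tauto

lemma sat_ex {S : Type} (M : Kripke S) (φ : CTL) (s : S) :
    sat M (CTL.ex φ) s ↔ ∃ t, M.rel s t ∧ sat M φ t := by
  simp only [CTL.ex, CTL.neg, sat]
  constructor
  · intro h
    by_contra hc
    push_neg at hc
    exact h fun t ht hφ => hc t ht hφ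
  · rintro ⟨t, ht, hφ⟩ h
    exact h t ht hφ

lemma sat_ag {S : Type} (M : Kripke S) (φ : CTL) (s : S) :
    sat M (CTL.ag φ) s ↔ ∀ π, isPath M π → π 0 = s → ∀ i, sat M φ (π i) := by
  simp only [CTL.ag, CTL.ef, CTL.neg, CTL.top, sat]
  constructor
  · intro h π hπ h0 i
    by_contra hc
    exact h ⟨π, hπ, h0, i, fun hs => hc hs, fun _ _ => id⟩
  · rintro h ⟨π, hπ, h0, i, hi, -⟩
    exact hi (h π hπ h0 i)

lemma chain_sink {m : ℕ} {s t : Fin (2 * m + 2)} (h : chainRel m s t)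
    (h1 : s.val ≠ 0) (h2 : ¬(2 ≤ s.val ∧ s.val ≤ 2 * m)) : t = s := by
  rcases h with ⟨h, -⟩ | ⟨a, b, -⟩ | h
  · omega
  · exact absurd ⟨a, b⟩ h2
  · exact h

lemma path_stay {m : ℕ} (v : Fin (2 * m + 2)) (hv1 : v.val ≠ 0)
    (hv2 : ¬(2 ≤ v.val ∧ v.val ≤ 2 * m)) (π : ℕ → Fin (2 * m + 2))
    (hπ : isPath (chainModel m) π) (h0 : π 0 = v) : ∀ i, π i = v := by
  intro i
  induction i with
  | zero => exact h0
  | succ i ih =>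
    have h := hπ i
    rw [ih] at h
    exact chain_sink h hv1 hv2

lemma chainRel_step {m : ℕ} (a : ℕ) (h1 : 2 ≤ a) (h2 : a ≤ 2 * m)
    (ha : a < 2 * m + 2) (hb : a + 1 < 2 * m + 2) :
    chainRel m ⟨a, ha⟩ ⟨a + 1, hb⟩ :=
  Or.inr (Or.inl ⟨h1, h2, rfl⟩)

lemma chi_chain (m : ℕ) : ∀ k, k < m → ∀ s : Fin (2 * m + 2),
    s.val = 2 * (m - k) + 1 → sat (chainModel m) (chi k) s := by
  intro k
  induction k with
  | zero =>
    intro hk s hs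
    show sat (chainModel m) (CTL.ag (.var 0)) s
    rw [sat_ag]
    intro π hπ h0 i
    have hstay := path_stay s (by omega) (by omega) π hπ h0 i
    rw [hstay]
    exact ⟨rfl, by unfold chainVal; omega⟩
  | succ k ih =>
    intro hk s hs
    show sat (chainModel m) (CTL.conj (.var 0) (CTL.ex (CTL.conj (CTL.neg (.var 0)) (CTL.ex (chi k))))) s
    rw [sat_conj]
    refine ⟨⟨rfl, by unfold chainVal; omega⟩, ?_⟩
    rw [sat_ex]
    have hs' : (s : Fin (2 * m + 2)) = ⟨s.val, s.isLt⟩ := rfl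
    rw [hs']
    refine ⟨⟨s.val + 1, by omega⟩, chainRel_step _ (by omega) (by omega) _ _, ?_⟩
    rw [sat_conj]
    constructor
    · rintro ⟨-, hv⟩
      unfold chainVal at hv
      simp only at hv
      omega
    · rw [sat_ex]
      refine ⟨⟨s.val + 2, by omega⟩, chainRel_step _ (by omega) (by omega) _ _, ?_⟩
      exact ih (by omega) _ (by simp; omega)

end Aux

/-- A_m is satisfiable: it holds at the root of the chain model M_m. Moreover,
any state of any serial model satisfying A_m satisfies p, has a successor from
which p is always false on all paths (EX AG ¬p), and, for m ≥ 1, has a successor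
satisfying ¬p that starts an alternating ¬p/p chain of length 2m
(EX(¬p ∧ EX χ_{m-1})). -/


theorem Aform_satisfiable_and_consequences (m : ℕ) (hm : 1 ≤ m) :
    sat (chainModel m) (Aform m) (chainRoot m) ∧
    (∀ (S : Type) (M : Kripke S) (x : S), sat M (Aform m) x →
      sat M (.var 0) x ∧
      sat M (CTL.ex (CTL.ag (CTL.neg (.var 0)))) x ∧
      sat M (CTL.ex (CTL.conj (CTL.neg (.var 0)) (CTL.ex (chi (m - 1))))) x) := by
  constructor
  · rw [Aform, sat_conj]
    constructor
    · -- chi m at the root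
      obtain ⟨n, rfl⟩ : ∃ n, m = n + 1 := ⟨m - 1, by omega⟩
      show sat _ (CTL.conj (.var 0) (CTL.ex (CTL.conj (CTL.neg (.var 0)) (CTL.ex (chi n))))) _
      rw [sat_conj]
      refine ⟨⟨rfl, Or.inl rfl⟩, ?_⟩
      rw [sat_ex]
      refine ⟨⟨2, by omega⟩, Or.inl ⟨rfl, Or.inr rfl⟩, ?_⟩
      rw [sat_conj]
      constructor
      · rintro ⟨-, hv⟩
        unfold chainVal at hv
        simp only at hv
        omega
      · rw [sat_ex]
        refine ⟨⟨3, by omega⟩, chainRel_step 2 (by omega) (by omega) _ _, ?_⟩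
        exact chi_chain _ n (by omega) _ (by simp)
    · rw [sat_ex]
      refine ⟨⟨1, by omega⟩, Or.inl ⟨rfl, Or.inl rfl⟩, ?_⟩
      rw [sat_ag]
      intro π hπ h0 i
      have hstay := path_stay ⟨1, by omega⟩ (by simp) (by simp) π hπ h0 i
      rw [hstay]
      rintro ⟨-, hv⟩
      unfold chainVal at hv
      simp only at hv
      omega
  · intro S M x hx
    rw [Aform, sat_conj] at hx
    obtain ⟨hχ, hE⟩ := hx
    obtain ⟨n, rfl⟩ : ∃ n, m = n + 1 := ⟨m - 1, by omega⟩
    rw [show chi (n + 1) = CTL.conj (.var 0) (CTL.ex (CTL.conj (CTL.neg (.var 0)) (CTL.ex (chi n)))) from rfl,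
      sat_conj] at hχ
    simp only [Nat.add_sub_cancel]
    exact ⟨hχ.1, hE, hχ.2⟩
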